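/- arXiv:2108.09673 — 6 statements merged into one kernel-verified Lean document; each statement's English description precedes it below -/
import Mathlib

section
/- Let G be a graph with girth at least γ, and let α ≥ 1, δ = ⌊(γ-1)/(α+1)⌋. Then every path P of length δ between two vertices u and v is the unique shortest path between u and v; moreover, any other path P' between u and v satisfies |P'| > α·δ. -/
/-!
Two distinct `u`–`v` paths close up to a cycle of length at most the sum of their lengths, so
every path `P' ≠ P` has `|P'| ≥ γ - δ`, and `δ (α + 1) ≤ γ - 1` turns this into `|P'| > α δ`.
As `α ≥ 1`, every other path is longer than `P`, so `P` realises the distance.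
-/

namespace SimpleGraph

variable {V : Type*} {G : SimpleGraph V} {u v : V}

lemma girth_le_length_add_of_isPath_ne {p q : G.Walk u v} (hp : p.IsPath) (hq : q.IsPath)
    (hpq : p ≠ q) : G.girth ≤ p.length + q.length := by
  obtain ⟨_, -, -, c, hc, hlen⟩ := hp.exists_isCycle_length_le_add_of_ne hq hpq
  exact (girth_le_length hc).trans hlen

lemma dist_eq_length_of_forall_isPath_ne_length_le (p : G.Walk u v)
    (h : ∀ q : G.Walk u v, q.IsPath → q ≠ p → p.length ≤ q.length) :
    G.dist u v = p.length := by
  obtain ⟨q, hq, hqlen⟩ := p.reachable.exists_path_of_dist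
  refine le_antisymm (dist_le p) ?_
  rw [← hqlen]
  by_cases hqp : q = p
  · rw [hqp]
  · exact h q hq hqp

end SimpleGraph

open SimpleGraph

lemma Nat.floor_div_mul_le {K : Type*} [Semifield K] [LinearOrder K] [IsStrictOrderedRing K]
    [FloorSemiring K] {x c : K} (hx : 0 ≤ x) (hc : 0 < c) : (⌊x / c⌋₊ : K) * c ≤ x :=
  (le_div_iff₀ hc).mp (Nat.floor_le (div_nonneg hx hc.le))

/-- In a graph of girth at least `γ`, with `α ≥ 1` and `δ = ⌊(γ-1)/(α+1)⌋`,
every path `P` of length `δ` between `u` and `v` is the unique shortest path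
between them; moreover any other path `P'` between `u` and `v` has
`|P'| > α·δ`. -/
theorem stmt_0 {V : Type*} (G : SimpleGraph V) (γ : ℕ) (hγ : 1 ≤ γ)
    (α : ℝ) (hα : 1 ≤ α)
    (hgirth : (γ : ℕ∞) ≤ G.girth)
    (δ : ℕ) (hδ : δ = ⌊((γ : ℝ) - 1) / (α + 1)⌋₊)
    (u v : V) (P : G.Walk u v) (hP : P.IsPath) (hlen : P.length = δ) :
    (∀ P' : G.Walk u v, P'.IsPath → P' ≠ P → α * δ < (P'.length : ℝ)) ∧
      G.dist u v = δ := by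
  have hδγ : (δ : ℝ) * (α + 1) ≤ γ - 1 :=
    hδ ▸ Nat.floor_div_mul_le (by simpa using hγ) (by linarith)
  have hlong : ∀ P' : G.Walk u v, P'.IsPath → P' ≠ P → α * δ < (P'.length : ℝ) := by
    intro P' hP' hne
    have hγP' : γ ≤ δ + P'.length :=
      hlen ▸ (Nat.cast_le.mp hgirth).trans (girth_le_length_add_of_isPath_ne hP hP' hne.symm)
    have : (γ : ℝ) ≤ δ + P'.length := by exact_mod_cast hγP'
    linarith
  refine ⟨hlong, hlen ▸ dist_eq_length_of_forall_isPath_ne_length_le P fun Q hQ hQP => ?_⟩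
  have hQlong := hlong Q hQ hQP
  have : (δ : ℝ) ≤ α * δ := le_mul_of_one_le_left δ.cast_nonneg hα
  rw [hlen]
  exact_mod_cast (by linarith : (δ : ℝ) ≤ Q.length)
end

section
/- Let a, b > 1 and d > 0 be real numbers satisfying a^{-d} + b^{-d} ≤ 1. Then for all x, y ≥ 0: a·x^{1+1/d} + b·y^{1+1/d} ≥ (x+y)^{1+1/d}. -/
/-- If `a, b > 1`, `d > 0` and `a^{-d} + b^{-d} ≤ 1`, then for all
`x, y ≥ 0`: `a·x^{1+1/d} + b·y^{1+1/d} ≥ (x+y)^{1+1/d}`. -/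
theorem stmt_7 (a b d : ℝ) (ha : 1 < a) (hb : 1 < b) (hd : 0 < d)
    (h : a ^ (-d) + b ^ (-d) ≤ 1) (x y : ℝ) (hx : 0 ≤ x) (hy : 0 ≤ y) :
    (x + y) ^ (1 + 1 / d) ≤ a * x ^ (1 + 1 / d) + b * y ^ (1 + 1 / d) := by
  set p : ℝ := 1 + 1 / d with hp_def
  have hp : 1 ≤ p := by
    have : 0 < 1 / d := by positivity
    simp only [hp_def]; linarith
  have h1p : 1 - p = -(1/d) := by rw [hp_def]; ring
  have ha0 : (0:ℝ) < a := by linarith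
  have hb0 : (0:ℝ) < b := by linarith
  set w₁ : ℝ := a ^ (-d) with hw1_def
  have hw1_pos : 0 < w₁ := Real.rpow_pos_of_pos ha0 _
  have hbd_pos : 0 < b ^ (-d) := Real.rpow_pos_of_pos hb0 _
  set w₂ : ℝ := 1 - w₁ with hw2_def
  have hw2_ge : b ^ (-d) ≤ w₂ := by simp only [hw2_def]; linarith
  have hw2_pos : 0 < w₂ := lt_of_lt_of_le hbd_pos hw2_ge
  have jensen : (w₁ * (x / w₁) + w₂ * (y / w₂)) ^ p ≤
      w₁ * (x / w₁) ^ p + w₂ * (y / w₂) ^ p := by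
    have := Real.rpow_arith_mean_le_arith_mean_rpow Finset.univ ![w₁, w₂] ![x / w₁, y / w₂]
      (by intro i _; fin_cases i <;> simp [hw1_pos.le, hw2_pos.le])
      (by simp [Fin.sum_univ_succ, hw2_def])
      (by intro i _; fin_cases i <;> simp <;> positivity) hp
    simpa [Fin.sum_univ_succ] using this
  have hxy : w₁ * (x / w₁) + w₂ * (y / w₂) = x + y := by
    field_simp
  rw [hxy] at jensen
  refine jensen.trans ?_
  have key : ∀ w : ℝ, 0 < w → ∀ z : ℝ, 0 ≤ z → w * (z / w) ^ p = w ^ (1 - p) * z ^ p := by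
    intro w hw z hz
    rw [Real.div_rpow hz hw.le, Real.rpow_sub hw, Real.rpow_one]
    field_simp
  rw [key w₁ hw1_pos x hx, key w₂ hw2_pos y hy]
  have e1 : w₁ ^ (1 - p) = a := by
    rw [hw1_def, ← Real.rpow_mul ha0.le, h1p]
    have : -d * -(1/d) = 1 := by field_simp
    rw [this, Real.rpow_one]
  have e2 : w₂ ^ (1 - p) ≤ b := by
    have : w₂ ^ (1 - p) ≤ (b ^ (-d)) ^ (1 - p) :=
      Real.rpow_le_rpow_of_nonpos hbd_pos hw2_ge (by rw [h1p]; exact neg_nonpos.mpr (by positivity))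
    refine this.trans_eq ?_
    rw [← Real.rpow_mul hb0.le, h1p]
    have : -d * -(1/d) = 1 := by field_simp
    rw [this, Real.rpow_one]
  have hxp : 0 ≤ x ^ p := Real.rpow_nonneg hx _
  have hyp : 0 ≤ y ^ p := Real.rpow_nonneg hy _
  rw [e1]
  nlinarith [mul_le_mul_of_nonneg_right e2 hyp]
end

section
/- Fix an integer c ≥ 1, a real t > 0, and let (r_i) satisfy the recurrence r_{ic+j+1} = (1+4/t)·r_{ic+j} + (2+4/t)·r_{ic} for all i ≥ 0 and j ∈ [0,c-1]. Then for every i ≥ 0 and j ∈ [0, c-1], r_{ic+j} = [(1+4/t)^j·(t/2+2) - (t/2+1)]·r_{ic}, and consequently r_{ic} = [(1+4/t)^c·(t/2+2) - (t/2+1)]^i · r_0. -/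
section BlockwiseRecurrence

variable {R : Type*} [CommRing R] {a b k : R}

/-- The affine recurrence `x (j+1) = a x j + b x 0` is solved by its fixed-point form:
writing `b = k (a - 1)`, the shifted sequence `x j + k x 0` is geometric with ratio `a`. -/
theorem eq_of_affine_recurrence (hk : b = k * (a - 1)) (x : ℕ → R) (n : ℕ)
    (hx : ∀ j < n, x (j + 1) = a * x j + b * x 0) :
    ∀ j ≤ n, x j = (a ^ j * (k + 1) - k) * x 0 := by
  intro j hj
  induction j with
  | zero => ring
  | succ j ih =>
    rw [hx j hj, ih (by omega), hk]
    ring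

theorem Nat.add_div_mul_eq_of_lt {c j : ℕ} (i : ℕ) (hj : j < c) : (i * c + j) / c * c = i * c := by
  rw [Nat.add_comm, Nat.add_mul_div_right _ _ (by omega), Nat.div_eq_of_lt hj, Nat.zero_add]

variable {c : ℕ} {r : ℕ → R} (hk : b = k * (a - 1))
  (hr : ∀ n, r (n + 1) = a * r n + b * r (n / c * c))
include hk hr

theorem blockwise_recurrence_within_block (i : ℕ) {j : ℕ} (hj : j ≤ c) :
    r (i * c + j) = (a ^ j * (k + 1) - k) * r (i * c) :=
  eq_of_affine_recurrence hk (fun j ↦ r (i * c + j)) c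
    (fun j hj ↦ by
      simpa only [Nat.add_zero, ← Nat.add_assoc, Nat.add_div_mul_eq_of_lt i hj] using hr (i * c + j))
    j hj

theorem blockwise_recurrence_block_start (i : ℕ) :
    r (i * c) = (a ^ c * (k + 1) - k) ^ i * r 0 := by
  induction i with
  | zero => simp
  | succ i ih =>
    rw [Nat.succ_mul, blockwise_recurrence_within_block hk hr i le_rfl, ih, pow_succ,
      mul_assoc, mul_left_comm]

end BlockwiseRecurrence

theorem stmt_11_general (c : ℕ) (t : ℝ) (ht : 0 < t) (r : ℕ → ℝ)
    (hrec : ∀ i : ℕ, r (i + 1) = (1 + 4 / t) * r i + (2 + 4 / t) * r (i / c * c)) :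
    (∀ i : ℕ, ∀ j < c, r (i * c + j)
        = ((1 + 4 / t) ^ j * (t / 2 + 2) - (t / 2 + 1)) * r (i * c)) ∧
    (∀ i : ℕ, r (i * c)
        = ((1 + 4 / t) ^ c * (t / 2 + 2) - (t / 2 + 1)) ^ i * r 0) := by
  have hk : 2 + 4 / t = (t / 2 + 1) * (1 + 4 / t - 1) := by
    field_simp
    ring
  have hk1 : t / 2 + 2 = t / 2 + 1 + 1 := by ring
  rw [hk1]
  exact ⟨fun i _ hj ↦ blockwise_recurrence_within_block hk hrec i hj.le,
    blockwise_recurrence_block_start hk hrec⟩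

/-- For `c ≥ 1`, `t > 0` and a sequence satisfying
`r_{i+1} = (1+4/t)·r_i + (2+4/t)·r_{⌊i/c⌋·c}` with `r_0 > 0`:
`r_{ic+j} = [(1+4/t)^j·(t/2+2) - (t/2+1)]·r_{ic}` for `j ∈ [0,c-1]`, and
`r_{ic} = [(1+4/t)^c·(t/2+2) - (t/2+1)]^i·r_0`. -/
theorem stmt_11 (c : ℕ) (hc : 1 ≤ c) (t : ℝ) (ht : 0 < t) (r : ℕ → ℝ)
    (hr0 : 0 < r 0)
    (hrec : ∀ i : ℕ, r (i + 1) = (1 + 4 / t) * r i + (2 + 4 / t) * r (i / c * c)) :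
    (∀ i : ℕ, ∀ j < c, r (i * c + j)
        = ((1 + 4 / t) ^ j * (t / 2 + 2) - (t / 2 + 1)) * r (i * c)) ∧
    (∀ i : ℕ, r (i * c)
        = ((1 + 4 / t) ^ c * (t / 2 + 2) - (t / 2 + 1)) ^ i * r 0) :=
  stmt_11_general c t ht r hrec
end

section
/- Let c ≥ 1 be an integer and let (r_i) satisfy r_0 > 0 and r_{i+1} = (1+1/c)·r_i + (2+1/c)·r_{⌊i/c⌋·c} (i.e. the recurrence with t = 4c). Then r_c = [(1+1/c)^c·(2c+2) - (2c+1)]·r_0 > c·r_0. -/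
/-! Inside the first block `i < c` the recurrence is affine with fixed point `-(2c+1)·r₀`,
so `r_i + (2c+1)·r₀ = (1+1/c)^i·(2c+2)·r₀`; the bound then comes from `(1+1/c)^c ≥ 2`. -/

theorem sub_eq_pow_mul_of_forall_lt {R : Type*} [CommRing R] (u : ℕ → R) (a p : R) (n : ℕ)
    (hrec : ∀ i < n, u (i + 1) - p = a * (u i - p)) :
    ∀ i ≤ n, u i - p = a ^ i * (u 0 - p) := by
  intro i hi
  induction i with
  | zero => simp
  | succ i ih => rw [hrec i hi, ih (by omega), pow_succ', mul_assoc]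

theorem two_le_one_add_inv_pow {c : ℕ} (hc : c ≠ 0) : (2 : ℝ) ≤ (1 + 1 / (c : ℝ)) ^ c := by
  have hc' : (c : ℝ) ≠ 0 := Nat.cast_ne_zero.mpr hc
  calc (2 : ℝ) = 1 + c * (1 / c) := by rw [mul_one_div_cancel hc']; norm_num
    _ ≤ (1 + 1 / c) ^ c := one_add_mul_le_pow (by linarith [show 0 ≤ 1 / (c : ℝ) by positivity]) c

/-- For `c ≥ 1` and a sequence with `r_0 > 0` satisfying
`r_{i+1} = (1+1/c)·r_i + (2+1/c)·r_{⌊i/c⌋·c}`, one has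
`r_c = [(1+1/c)^c·(2c+2) - (2c+1)]·r_0 > c·r_0`. -/
theorem stmt_12 (c : ℕ) (hc : 1 ≤ c) (r : ℕ → ℝ) (hr0 : 0 < r 0)
    (hrec : ∀ i : ℕ, r (i + 1)
        = (1 + 1 / (c : ℝ)) * r i + (2 + 1 / (c : ℝ)) * r (i / c * c)) :
    r c = ((1 + 1 / (c : ℝ)) ^ c * (2 * c + 2) - (2 * c + 1)) * r 0 ∧
      (c : ℝ) * r 0 < r c := by
  have hc0 : (c : ℝ) ≠ 0 := Nat.cast_ne_zero.mpr (by omega)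
  have hblock : ∀ i < c, r (i + 1) - (-(2 * c + 1) * r 0)
      = (1 + 1 / (c : ℝ)) * (r i - (-(2 * c + 1) * r 0)) := by
    intro i hi
    rw [hrec i, Nat.div_eq_of_lt hi, zero_mul]
    field_simp
    ring
  have hclosed : r c = ((1 + 1 / (c : ℝ)) ^ c * (2 * c + 2) - (2 * c + 1)) * r 0 := by
    have hgeom := sub_eq_pow_mul_of_forall_lt r _ _ c hblock c le_rfl
    linear_combination hgeom
  refine ⟨hclosed, ?_⟩
  have hpow : (2 : ℝ) ≤ (1 + 1 / (c : ℝ)) ^ c := two_le_one_add_inv_pow (by omega)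
  rw [hclosed]
  have hcoef : (c : ℝ) < (1 + 1 / (c : ℝ)) ^ c * (2 * c + 2) - (2 * c + 1) := by
    nlinarith [(Nat.cast_nonneg c : (0 : ℝ) ≤ c)]
  exact mul_lt_mul_of_pos_right hcoef hr0
end

section
/- Let α ≥ 1 and let f⁻¹ : ℕ → ℕ be a monotone function with f⁻¹(j) ≤ j for all j. Define sequences Λ_j by Λ_0 = 1 and Λ_{j+1} = Λ_j + Λ_{f⁻¹(j)}, and r_j by r_0 = 1 and r_{j+1} = (1+1/α)·r_j + (2+1/α)·r_{f⁻¹(j)}. If d > 0 satisfies (1+1/α)^{-d} + (2+1/α)^{-d} ≤ 1, then r_j ≥ Λ_j^{1+1/d} for every j ≥ 0. -/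
/-!
Put `p = 1 + 1/d`. Writing `x + y` as a convex combination of `x / (1 - t)` and `y / t` with
`t = b ^ (-d)`, convexity of `z ↦ z ^ p` gives `(x + y) ^ p ≤ a x ^ p + b y ^ p` whenever
`a ^ (-d) + b ^ (-d) ≤ 1`, because `(a ^ (-d)) ^ (1 - p) = a`. Feeding `Λ_j` and `Λ_{f⁻¹(j)}`
into this inequality turns the recurrence for `Λ` into the recurrence for `r`, and a strong
induction along `j` finishes the proof.
-/

open Real

theorem Nat.forall_of_step_of_le_self {P : ℕ → Prop} (g : ℕ → ℕ) (hg : ∀ j, g j ≤ j) (h0 : P 0)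
    (hsucc : ∀ j, P j → P (g j) → P (j + 1)) : ∀ j, P j := by
  intro j
  induction j using Nat.strong_induction_on with
  | _ j ih =>
    match j with
    | 0 => exact h0
    | k + 1 => exact hsucc k (ih k k.lt_succ_self) (ih (g k) (Nat.lt_succ_of_le (hg k)))

theorem Real.add_rpow_le_rpow_mul_rpow_add_rpow_mul_rpow {p s t x y : ℝ} (hp : 1 ≤ p)
    (hs : 0 < s) (ht : 0 < t) (hst : s + t ≤ 1) (hx : 0 ≤ x) (hy : 0 ≤ y) :
    (x + y) ^ p ≤ s ^ (1 - p) * x ^ p + t ^ (1 - p) * y ^ p := by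
  have ht' : 0 < 1 - t := by linarith
  have hconv := (convexOn_rpow hp).2 (Set.mem_Ici.mpr (div_nonneg hx ht'.le))
    (Set.mem_Ici.mpr (div_nonneg hy ht.le)) ht'.le ht.le (by ring)
  have hcomb : (1 - t) * (x / (1 - t)) + t * (y / t) = x + y := by field_simp
  have hweight : ∀ {w z : ℝ}, 0 < w → 0 ≤ z → w * (z / w) ^ p = w ^ (1 - p) * z ^ p :=
    fun hw hz => by rw [div_rpow hz hw.le, rpow_sub hw, rpow_one]; ring
  have hmono : (1 - t) ^ (1 - p) ≤ s ^ (1 - p) :=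
    rpow_le_rpow_of_nonpos hs (by linarith) (by linarith)
  simp only [smul_eq_mul, hcomb, hweight ht' hx, hweight ht hy] at hconv
  nlinarith [rpow_nonneg hx p]

theorem Real.add_rpow_le_mul_rpow_add_mul_rpow {a b d x y : ℝ} (ha : 0 < a) (hb : 0 < b)
    (hd : 0 < d) (hab : a ^ (-d) + b ^ (-d) ≤ 1) (hx : 0 ≤ x) (hy : 0 ≤ y) :
    (x + y) ^ (1 + 1 / d) ≤ a * x ^ (1 + 1 / d) + b * y ^ (1 + 1 / d) := by
  have hinv : ∀ {c : ℝ}, 0 < c → (c ^ (-d)) ^ (1 - (1 + 1 / d)) = c := fun hc => by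
    rw [← rpow_mul hc.le, show -d * (1 - (1 + 1 / d)) = 1 by field_simp; ring, rpow_one]
  have h := add_rpow_le_rpow_mul_rpow_add_rpow_mul_rpow
    (le_add_of_nonneg_right (one_div_nonneg.2 hd.le))
    (rpow_pos_of_pos ha (-d)) (rpow_pos_of_pos hb (-d)) hab hx hy
  rwa [hinv ha, hinv hb] at h

theorem stmt_15_general (α : ℝ) (hα : 1 ≤ α) (finv : ℕ → ℕ)
    (hle : ∀ j, finv j ≤ j) (Λ r : ℕ → ℝ)
    (hΛ0 : Λ 0 = 1) (hΛ : ∀ j, Λ (j + 1) = Λ j + Λ (finv j))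
    (hr0 : r 0 = 1)
    (hr : ∀ j, r (j + 1) = (1 + 1 / α) * r j + (2 + 1 / α) * r (finv j))
    (d : ℝ) (hd : 0 < d)
    (hsum : (1 + 1 / α) ^ (-d) + (2 + 1 / α) ^ (-d) ≤ 1) :
    ∀ j, Λ j ^ (1 + 1 / d) ≤ r j := by
  have hα0 : 0 < α := by linarith
  have ha : 0 < 1 + 1 / α := by positivity
  have hb : 0 < 2 + 1 / α := by positivity
  have hΛ_nonneg : ∀ j, 0 ≤ Λ j := Nat.forall_of_step_of_le_self finv hle (by simp [hΛ0])
    fun j h₁ h₂ => by rw [hΛ]; positivity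
  refine Nat.forall_of_step_of_le_self finv hle (by simp [hΛ0, hr0]) fun j h₁ h₂ => ?_
  calc Λ (j + 1) ^ (1 + 1 / d)
      ≤ (1 + 1 / α) * Λ j ^ (1 + 1 / d) + (2 + 1 / α) * Λ (finv j) ^ (1 + 1 / d) := by
        rw [hΛ]
        exact add_rpow_le_mul_rpow_add_mul_rpow ha hb hd hsum (hΛ_nonneg j) (hΛ_nonneg _)
    _ ≤ r (j + 1) := by
        rw [hr]
        gcongr

/-- Let `α ≥ 1`, `f⁻¹` monotone with `f⁻¹(j) ≤ j`, `Λ_0 = 1`,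
`Λ_{j+1} = Λ_j + Λ_{f⁻¹(j)}`, `r_0 = 1`,
`r_{j+1} = (1+1/α)·r_j + (2+1/α)·r_{f⁻¹(j)}`. If `d > 0` satisfies
`(1+1/α)^{-d} + (2+1/α)^{-d} ≤ 1`, then `r_j ≥ Λ_j^{1+1/d}` for all `j`. -/
theorem stmt_15 (α : ℝ) (hα : 1 ≤ α) (finv : ℕ → ℕ) (hmono : Monotone finv)
    (hle : ∀ j, finv j ≤ j) (Λ r : ℕ → ℝ)
    (hΛ0 : Λ 0 = 1) (hΛ : ∀ j, Λ (j + 1) = Λ j + Λ (finv j))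
    (hr0 : r 0 = 1)
    (hr : ∀ j, r (j + 1) = (1 + 1 / α) * r j + (2 + 1 / α) * r (finv j))
    (d : ℝ) (hd : 0 < d)
    (hsum : (1 + 1 / α) ^ (-d) + (2 + 1 / α) ^ (-d) ≤ 1) :
    ∀ j, Λ j ^ (1 + 1 / d) ≤ r j :=
  stmt_15_general α hα finv hle Λ r hΛ0 hΛ hr0 hr d hd hsum
end

section
/- Let c ≥ 2 be an integer and k ≥ 1. Let i_F, j_F be integers with j_F ∈ [1,c] and j_F·(c+1)^{i_F} < k+2 and i_F ≤ ⌈log_{c+1}(k+2)⌉. Let r_F = [(1+1/c)^{j_F}·(2c+2) − (2c+1)]·[(1+1/c)^c·(2c+2) − (2c+1)]^{i_F}. Then r_F ≤ 96·e²·k^{1 + 2/ln c}. -/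
set_option maxHeartbeats 1600000 in
/-- For an integer `c ≥ 2`, `k ≥ 1`, and `i_F, j_F` with `j_F ∈ [1,c]`,
`j_F·(c+1)^{i_F} < k+2` and `i_F ≤ ⌈log_{c+1}(k+2)⌉`, the quantity
`r_F = [(1+1/c)^{j_F}(2c+2) − (2c+1)]·[(1+1/c)^c(2c+2) − (2c+1)]^{i_F}`
satisfies `r_F ≤ 96·e²·k^{1+2/ln c}`. -/
theorem stmt_19 (c : ℕ) (hc : 2 ≤ c) (k : ℝ) (hk : 1 ≤ k) (iF jF : ℕ)
    (hj1 : 1 ≤ jF) (hjc : jF ≤ c)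
    (hjF : (jF : ℝ) * ((c : ℝ) + 1) ^ iF < k + 2)
    (hiF : (iF : ℤ) ≤ ⌈Real.logb ((c : ℝ) + 1) (k + 2)⌉) :
    ((1 + 1 / (c : ℝ)) ^ jF * (2 * (c : ℝ) + 2) - (2 * (c : ℝ) + 1)) *
        ((1 + 1 / (c : ℝ)) ^ c * (2 * (c : ℝ) + 2) - (2 * (c : ℝ) + 1)) ^ iF
      ≤ 96 * Real.exp 1 ^ 2 * k ^ (1 + 2 / Real.log c) := by
  have hcR : (2:ℝ) ≤ (c:ℝ) := by exact_mod_cast hc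
  have hc0 : (0:ℝ) < (c:ℝ) := by linarith
  have hlogc : 0 < Real.log (c:ℝ) := Real.log_pos (by linarith)
  have hlogc1 : 0 < Real.log ((c:ℝ)+1) := Real.log_pos (by linarith)
  set E := Real.exp 1 with hEdef
  have hE : (0:ℝ) < E := Real.exp_pos 1
  have hE1 : (1:ℝ) ≤ E := by
    have := Real.exp_one_gt_d9; simp only [← hEdef] at this; linarith
  have hEnum : E < 2.7182818286 := Real.exp_one_lt_d9
  have hinv : (0:ℝ) < 1/(c:ℝ) := by positivity
  have hx1 : (1:ℝ) ≤ 1 + 1/(c:ℝ) := by linarith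
  have hxe : 1 + 1/(c:ℝ) ≤ Real.exp (1/(c:ℝ)) := by
    have := Real.add_one_le_exp (1/(c:ℝ)); linarith
  have hpow : ∀ n : ℕ, ((1:ℝ) + 1/(c:ℝ))^n ≤ Real.exp ((n:ℝ)/(c:ℝ)) := by
    intro n
    calc ((1:ℝ) + 1/(c:ℝ))^n ≤ (Real.exp (1/(c:ℝ)))^n :=
          pow_le_pow_left₀ (by linarith) hxe n
      _ = Real.exp ((n:ℝ) * (1/(c:ℝ))) := (Real.exp_nat_mul _ n).symm
      _ = Real.exp ((n:ℝ)/(c:ℝ)) := by ring_nf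
  have hconv : ∀ t : ℝ, 0 ≤ t → t ≤ 1 → Real.exp t ≤ 1 + (E - 1) * t := by
    intro t ht0 ht1
    have h := convexOn_exp.2 (Set.mem_univ (0:ℝ)) (Set.mem_univ (1:ℝ))
      (by linarith : (0:ℝ) ≤ 1 - t) ht0 (by ring)
    simp only [smul_eq_mul, mul_zero, mul_one, zero_add, Real.exp_zero] at h
    nlinarith [h]
  -- bound on the first factor A
  have hA : (1 + 1/(c:ℝ)) ^ jF * (2 * (c:ℝ) + 2) - (2 * (c:ℝ) + 1)
      ≤ (3*E - 2) * (jF:ℝ) := by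
    have ht0 : (0:ℝ) ≤ (jF:ℝ)/(c:ℝ) := by positivity
    have ht1 : (jF:ℝ)/(c:ℝ) ≤ 1 := by
      rw [div_le_one hc0]; exact_mod_cast hjc
    have h1 := (hpow jF).trans (hconv _ ht0 ht1)
    have hj1R : (1:ℝ) ≤ (jF:ℝ) := by exact_mod_cast hj1
    have htc : (jF:ℝ)/(c:ℝ) * (c:ℝ) = (jF:ℝ) := div_mul_cancel₀ _ (ne_of_gt hc0)
    nlinarith [mul_le_mul_of_nonneg_right h1 (by linarith : (0:ℝ) ≤ 2*(c:ℝ)+2),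
      mul_nonneg (by linarith : (0:ℝ) ≤ E - 1) ht0]
  -- bound on the bracket B
  have hBe : (1 + 1/(c:ℝ)) ^ c ≤ E := by
    have := hpow c
    rw [div_self (ne_of_gt hc0)] at this
    exact this
  have hB : (1 + 1/(c:ℝ)) ^ c * (2 * (c:ℝ) + 2) - (2 * (c:ℝ) + 1)
      ≤ 2 * E * ((c:ℝ) + 1) := by nlinarith
  have hxj1 : (1:ℝ) ≤ (1 + 1/(c:ℝ)) ^ jF := one_le_pow₀ hx1
  have hxc1 : (1:ℝ) ≤ (1 + 1/(c:ℝ)) ^ c := one_le_pow₀ hx1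
  have hA0 : (0:ℝ) ≤ (1 + 1/(c:ℝ)) ^ jF * (2 * (c:ℝ) + 2) - (2 * (c:ℝ) + 1) := by
    nlinarith
  have hB0 : (0:ℝ) ≤ (1 + 1/(c:ℝ)) ^ c * (2 * (c:ℝ) + 2) - (2 * (c:ℝ) + 1) := by
    nlinarith
  -- step 1: replace the two factors
  have step1 : ((1 + 1/(c:ℝ)) ^ jF * (2 * (c:ℝ) + 2) - (2 * (c:ℝ) + 1)) *
        ((1 + 1/(c:ℝ)) ^ c * (2 * (c:ℝ) + 2) - (2 * (c:ℝ) + 1)) ^ iF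
      ≤ ((3*E - 2) * (jF:ℝ)) * (2 * E * ((c:ℝ) + 1)) ^ iF := by
    exact mul_le_mul hA (pow_le_pow_left₀ hB0 hB iF) (pow_nonneg hB0 iF)
      (mul_nonneg (by linarith) (Nat.cast_nonneg _))
  have step2 : ((3*E - 2) * (jF:ℝ)) * (2 * E * ((c:ℝ) + 1)) ^ iF
      = (3*E - 2) * (2*E) ^ iF * ((jF:ℝ) * ((c:ℝ) + 1) ^ iF) := by
    rw [mul_pow]; ring
  have h3E2 : (0:ℝ) ≤ 3*E - 2 := by linarith
  have h2E0 : (0:ℝ) < 2*E := by linarith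
  have h2E1 : (1:ℝ) ≤ 2*E := by linarith
  have step3 : (3*E - 2) * (2*E) ^ iF * ((jF:ℝ) * ((c:ℝ) + 1) ^ iF)
      ≤ (3*E - 2) * (2*E) ^ iF * (k + 2) := by
    apply mul_le_mul_of_nonneg_left (le_of_lt hjF)
    exact mul_nonneg h3E2 (pow_nonneg (by linarith) iF)
  -- bound (2E)^iF
  set α := Real.log (2*E) / Real.log ((c:ℝ)+1) with hαdef
  have hα0 : 0 ≤ α := div_nonneg (Real.log_nonneg (by linarith)) hlogc1.le
  have hL0 : (0:ℤ) ≤ ⌈Real.logb ((c:ℝ)+1) (k+2)⌉ := le_trans (by positivity) hiF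
  have him : iF ≤ (⌈Real.logb ((c:ℝ)+1) (k+2)⌉).toNat := by
    have h := Int.toNat_le_toNat hiF
    simpa using h
  have hmR : (((⌈Real.logb ((c:ℝ)+1) (k+2)⌉).toNat : ℝ))
      ≤ Real.logb ((c:ℝ)+1) (k+2) + 1 := by
    have h1 : (((⌈Real.logb ((c:ℝ)+1) (k+2)⌉).toNat : ℤ) : ℝ)
        = ((⌈Real.logb ((c:ℝ)+1) (k+2)⌉ : ℤ) : ℝ) := by
      rw [Int.toNat_of_nonneg hL0]
    have h2 := Int.ceil_lt_add_one (Real.logb ((c:ℝ)+1) (k+2))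
    push_cast at h1
    linarith [h1 ▸ h2]
  have hkey : (2*E) ^ (Real.logb ((c:ℝ)+1) (k+2)) = (k+2) ^ α := by
    rw [Real.rpow_def_of_pos h2E0, Real.rpow_def_of_pos (by linarith : (0:ℝ) < k+2),
      Real.logb, hαdef]
    congr 1
    ring
  have h2Eif : (2*E) ^ iF ≤ (2*E) * (k+2) ^ α := by
    calc (2*E) ^ iF ≤ (2*E) ^ (⌈Real.logb ((c:ℝ)+1) (k+2)⌉).toNat :=
          pow_le_pow_right₀ h2E1 him
      _ = (2*E) ^ (((⌈Real.logb ((c:ℝ)+1) (k+2)⌉).toNat : ℝ)) :=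
          (Real.rpow_natCast _ _).symm
      _ ≤ (2*E) ^ (Real.logb ((c:ℝ)+1) (k+2) + 1) :=
          Real.rpow_le_rpow_of_exponent_le h2E1 hmR
      _ = (2*E) ^ (Real.logb ((c:ℝ)+1) (k+2)) * (2*E) := by
          rw [Real.rpow_add h2E0, Real.rpow_one]
      _ = (2*E) * (k+2) ^ α := by rw [hkey]; ring
  have q1 : (k+2) ^ α ≤ (3*k) ^ α :=
    Real.rpow_le_rpow (by linarith) (by linarith) hα0
  have q2 : ((3:ℝ)*k) ^ α = (3:ℝ)^α * k^α :=
    Real.mul_rpow (by norm_num) (by linarith)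
  have q3 : (3:ℝ)^α ≤ 2*E := by
    rw [Real.rpow_def_of_pos (by norm_num : (0:ℝ) < 3)]
    have h3 : Real.log 3 ≤ Real.log ((c:ℝ)+1) :=
      Real.log_le_log (by norm_num) (by linarith)
    have hle : Real.log 3 * α ≤ Real.log (2*E) := by
      have := mul_le_mul_of_nonneg_left h3 hα0
      calc Real.log 3 * α = α * Real.log 3 := by ring
        _ ≤ α * Real.log ((c:ℝ)+1) := this
        _ = Real.log (2*E) := div_mul_cancel₀ _ (ne_of_gt hlogc1)
    calc Real.exp (Real.log 3 * α) ≤ Real.exp (Real.log (2*E)) :=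
          Real.exp_le_exp.2 hle
      _ = 2*E := Real.exp_log h2E0
  have hα2 : α ≤ 2 / Real.log (c:ℝ) := by
    rw [hαdef, div_le_div_iff₀ hlogc1 hlogc]
    have hlog2E : Real.log (2*E) ≤ 2 := by
      rw [Real.log_mul (by norm_num) (ne_of_gt hE), hEdef, Real.log_exp]
      have := Real.log_two_lt_d9; linarith
    have hcc : Real.log (c:ℝ) ≤ Real.log ((c:ℝ)+1) :=
      Real.log_le_log hc0 (by linarith)
    nlinarith
  have q4 : k^α ≤ k ^ (2 / Real.log (c:ℝ)) :=
    Real.rpow_le_rpow_of_exponent_le hk hα2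
  have hkα0 : (0:ℝ) ≤ k ^ α := Real.rpow_nonneg (by linarith) α
  have hkβ0 : (0:ℝ) ≤ k ^ (2 / Real.log (c:ℝ)) := Real.rpow_nonneg (by linarith) _
  have h5 : (2*E) ^ iF ≤ 4*E^2 * k ^ (2 / Real.log (c:ℝ)) := by
    calc (2*E) ^ iF ≤ (2*E) * (k+2) ^ α := h2Eif
      _ ≤ (2*E) * ((3:ℝ)^α * k^α) := by
          apply mul_le_mul_of_nonneg_left _ h2E0.le
          rw [← q2]; exact q1
      _ ≤ (2*E) * ((2*E) * k ^ (2 / Real.log (c:ℝ))) := by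
          apply mul_le_mul_of_nonneg_left _ h2E0.le
          exact mul_le_mul q3 q4 hkα0 h2E0.le
      _ = 4*E^2 * k ^ (2 / Real.log (c:ℝ)) := by ring
  -- combine
  have hsplit : k ^ (1 + 2 / Real.log (c:ℝ)) = k * k ^ (2 / Real.log (c:ℝ)) := by
    rw [Real.rpow_add (by linarith : (0:ℝ) < k), Real.rpow_one]
  calc ((1 + 1/(c:ℝ)) ^ jF * (2 * (c:ℝ) + 2) - (2 * (c:ℝ) + 1)) *
        ((1 + 1/(c:ℝ)) ^ c * (2 * (c:ℝ) + 2) - (2 * (c:ℝ) + 1)) ^ iF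
      ≤ (3*E - 2) * (2*E) ^ iF * (k + 2) := by
        rw [← step2] at step3; exact (step1.trans (step2 ▸ step3))
    _ ≤ (3*E - 2) * (4*E^2 * k ^ (2 / Real.log (c:ℝ))) * (3*k) := by
        apply mul_le_mul (mul_le_mul_of_nonneg_left h5 h3E2) (by linarith)
          (by linarith) (mul_nonneg h3E2 (by positivity))
    _ ≤ 96 * E^2 * k ^ (1 + 2 / Real.log (c:ℝ)) := by
        rw [hsplit]
        have hkk : (0:ℝ) ≤ k * k ^ (2 / Real.log (c:ℝ)) :=
          mul_nonneg (by linarith) hkβ0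
        nlinarith [mul_nonneg hkk hE.le, mul_nonneg hkk (mul_nonneg hE.le hE.le)]
end
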